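/- arXiv:2509.22219 — 4 statements merged into one kernel-verified Lean document; each statement's English description precedes it below -/
import Mathlib

section
/- Let n = 2M, A ∈ SO(n), λ ∈ ℝᴹ, and B = Aᵀ(⊕ᵢ λᵢ J)A. Let x ∈ ℝⁿ, v = Ax with blocks v₁, …, v_M ∈ ℝ², assume v₁ ≠ 0, and let t₀ ∈ ℝ satisfy R(t₀λ₁)e₁ = v₁/‖v₁‖₂. Then exp(−t₀B)·x = Aᵀ(‖v₁‖₂ e₁ ⊕ R(−t₀λ₂)v₂ ⊕ ⋯ ⊕ R(−t₀λ_M)v_M); in particular the point Aᵀ · invRep(x; t₀) lies on the orbit {exp(tB)x : t ∈ ℝ} of x. -/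
open Matrix NormedSpace

noncomputable section

/-- `R(t)`: the 2×2 rotation matrix. -/
def R2 (t : ℝ) : Matrix (Fin 2) (Fin 2) ℝ :=
  !![Real.cos t, -Real.sin t; Real.sin t, Real.cos t]

/-- `J`: the 2×2 matrix with rows (0, -1) and (1, 0). -/
def Jmat : Matrix (Fin 2) (Fin 2) ℝ := !![0, -1; 1, 0]

/-- Index type for `ℝⁿ` with `n = 2M`: component `2(i-1)+p` of block `i` is indexed `(p, i)`. -/
abbrev Idx (M : ℕ) := Fin 2 × Fin M

/-- `SO(n)` for `n = 2M`, on the block index type. -/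
def SOb (M : ℕ) : Set (Matrix (Idx M) (Idx M) ℝ) :=
  {A | Aᵀ * A = 1 ∧ A.det = 1}

/-- The block-diagonal matrix `⊕ᵢ Cᵢ`. -/
def bdiag {M : ℕ} (C : Fin M → Matrix (Fin 2) (Fin 2) ℝ) : Matrix (Idx M) (Idx M) ℝ :=
  Matrix.blockDiagonal C

/-- The `i`-th 2-dimensional block `vᵢ` of a vector `v ∈ ℝⁿ`. -/
def blk {M : ℕ} (v : Idx M → ℝ) (i : Fin M) : Fin 2 → ℝ := fun p => v (p, i)

/-- Concatenation `u₁ ⊕ ⋯ ⊕ u_M` of 2-dimensional blocks. -/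
def cat {M : ℕ} (u : Fin M → (Fin 2 → ℝ)) : Idx M → ℝ := fun pi => u pi.2 pi.1

/-- `e₁ = (1, 0) ∈ ℝ²`. -/
def e1 : Fin 2 → ℝ := ![1, 0]

/-- The Euclidean norm `‖u‖₂` of `u ∈ ℝ²`. -/
def norm2 (u : Fin 2 → ℝ) : ℝ := Real.sqrt (u 0 ^ 2 + u 1 ^ 2)

/-- `t₀` is valid for `x` (w.r.t. `A`, `λ`): `R(t₀λ₁)e₁ = v₁/‖v₁‖₂` where `v = Ax`. -/
def valid {M : ℕ} [NeZero M] (A : Matrix (Idx M) (Idx M) ℝ) (lam : Fin M → ℝ)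
    (x : Idx M → ℝ) (t₀ : ℝ) : Prop :=
  (R2 (t₀ * lam 0)).mulVec e1 = (norm2 (blk (A.mulVec x) 0))⁻¹ • blk (A.mulVec x) 0

/-- `invRep(x; t₀) = ‖v₁‖₂ e₁ ⊕ R(−t₀λ₂)v₂ ⊕ ⋯ ⊕ R(−t₀λ_M)v_M`, where `v = Ax`. -/
def invRep {M : ℕ} [NeZero M] (A : Matrix (Idx M) (Idx M) ℝ) (lam : Fin M → ℝ)
    (x : Idx M → ℝ) (t₀ : ℝ) : Idx M → ℝ :=
  cat (fun i =>
    if i = 0 then norm2 (blk (A.mulVec x) 0) • e1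
    else (R2 (-(t₀ * lam i))).mulVec (blk (A.mulVec x) i))

/-!
Under `z ↦ Algebra.leftMulMatrix Complex.basisOneI z`, `J` is the image of `I` and `R(t)` that of
`exp (t I)`, so `exp (t J) = R(t)` because continuous algebra maps commute with `exp`.
Conjugating by the orthogonal `A`, `exp(−t₀B) = Aᵀ (⊕ᵢ R(−t₀λᵢ)) A`. Validity of `t₀` says
`v₁ = ‖v₁‖ R(t₀λ₁) e₁`, hence `R(−t₀λ₁) v₁ = ‖v₁‖ e₁`, while the other blocks agree with
`invRep` as they stand. The orbit statement is the case `t = −t₀`.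
-/

theorem exp_transpose_mul_mul_of_transpose_mul_self_eq_one {m 𝔸 : Type*} [Fintype m]
    [DecidableEq m] [NormedCommRing 𝔸] [NormedAlgebra ℚ 𝔸] [CompleteSpace 𝔸] {A : Matrix m m 𝔸}
    (hA : Aᵀ * A = 1) (D : Matrix m m 𝔸) : exp (Aᵀ * D * A) = Aᵀ * exp D * A :=
  exp_units_conj ⟨Aᵀ, A, hA, mul_eq_one_comm.mp hA⟩ D

open Complex in
theorem R2_eq_leftMulMatrix_exp (t : ℝ) :
    R2 t = Algebra.leftMulMatrix basisOneI (Complex.exp (t * I)) := by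
  rw [Algebra.leftMulMatrix_complex, exp_ofReal_mul_I_re, exp_ofReal_mul_I_im, R2]

open Complex in
theorem smul_Jmat_eq_leftMulMatrix (t : ℝ) :
    t • Jmat = Algebra.leftMulMatrix basisOneI (t * I) := by
  rw [Algebra.leftMulMatrix_complex, Jmat]
  ext i j
  fin_cases i <;> fin_cases j <;> simp

theorem R2_add (s t : ℝ) : R2 (s + t) = R2 s * R2 t := by
  simp only [R2_eq_leftMulMatrix_exp, Complex.ofReal_add, add_mul, Complex.exp_add, map_mul]

theorem R2_neg_mul_self (s : ℝ) : R2 (-s) * R2 s = 1 := by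
  rw [← R2_add, neg_add_cancel, R2_eq_leftMulMatrix_exp]
  simp

open scoped Norms.Operator in
theorem exp_smul_Jmat (t : ℝ) : exp (t • Jmat) = R2 t := by
  have hcont : Continuous (Algebra.leftMulMatrix Complex.basisOneI) :=
    LinearMap.continuous_of_finiteDimensional (Algebra.leftMulMatrix Complex.basisOneI).toLinearMap
  rw [smul_Jmat_eq_leftMulMatrix, R2_eq_leftMulMatrix_exp, Complex.exp_eq_exp_ℂ]
  exact (map_exp _ hcont _).symm

open scoped Norms.Operator in
theorem exp_smul_bdiag_smul_Jmat {M : ℕ} (t : ℝ) (lam : Fin M → ℝ) :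
    exp (t • bdiag fun i => lam i • Jmat) = bdiag fun i => R2 (t * lam i) := by
  rw [bdiag, ← blockDiagonal_smul, exp_blockDiagonal, bdiag]
  congr 1
  ext1 i
  -- `rw` cannot see through the operator-norm instances that `Pi.coe_exp` is stated with
  refine (Pi.coe_exp _ i).trans ?_
  rw [Pi.smul_apply, smul_smul]
  exact exp_smul_Jmat _

theorem bdiag_mulVec {M : ℕ} (C : Fin M → Matrix (Fin 2) (Fin 2) ℝ) (v : Idx M → ℝ) :
    bdiag C *ᵥ v = cat fun i => C i *ᵥ blk v i := by
  ext ⟨p, i⟩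
  simp only [bdiag, cat, blk, mulVec, dotProduct, blockDiagonal_apply, Fintype.sum_prod_type]
  rw [Finset.sum_comm]
  simp

theorem norm2_ne_zero {u : Fin 2 → ℝ} (hu : u ≠ 0) : norm2 u ≠ 0 := by
  rw [norm2, Real.sqrt_ne_zero']
  contrapose! hu
  ext p
  fin_cases p <;> simp <;> nlinarith [sq_nonneg (u 0), sq_nonneg (u 1)]

theorem R2_neg_mulVec_eq_smul_e1 {s c : ℝ} {u : Fin 2 → ℝ} (hc : c ≠ 0)
    (h : R2 s *ᵥ e1 = c⁻¹ • u) : R2 (-s) *ᵥ u = c • e1 := by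
  have hu : u = c • (R2 s *ᵥ e1) := by rw [h, smul_inv_smul₀ hc]
  rw [hu, mulVec_smul, mulVec_mulVec, R2_neg_mul_self, one_mulVec]

theorem invRep_eq_cat_R2_mulVec {M : ℕ} [NeZero M] {A : Matrix (Idx M) (Idx M) ℝ}
    {lam : Fin M → ℝ} {x : Idx M → ℝ} {t₀ : ℝ} (hv : blk (A *ᵥ x) 0 ≠ 0)
    (ht₀ : valid A lam x t₀) :
    invRep A lam x t₀ = cat fun i => R2 (-t₀ * lam i) *ᵥ blk (A *ᵥ x) i := by
  unfold invRep
  congr 1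
  ext1 i
  split_ifs with hi
  · subst hi
    rw [neg_mul, R2_neg_mulVec_eq_smul_e1 (norm2_ne_zero hv) ht₀]
  · rw [neg_mul]

/-- `exp(−t₀B)x = Aᵀ(‖v₁‖₂e₁ ⊕ R(−t₀λ₂)v₂ ⊕ ⋯)`; in particular
`Aᵀ · invRep(x; t₀)` lies on the orbit `{exp(tB)x : t ∈ ℝ}` of `x`. -/
theorem stmt4 (M : ℕ) [NeZero M] (A : Matrix (Idx M) (Idx M) ℝ) (hA : A ∈ SOb M)
    (lam : Fin M → ℝ) (B : Matrix (Idx M) (Idx M) ℝ)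
    (hB : B = Aᵀ * bdiag (fun i => lam i • Jmat) * A)
    (x : Idx M → ℝ) (hv : blk (A.mulVec x) 0 ≠ 0)
    (t₀ : ℝ) (ht₀ : valid A lam x t₀) :
    (NormedSpace.exp ((-t₀) • B)).mulVec x = Aᵀ.mulVec (invRep A lam x t₀) ∧
      Aᵀ.mulVec (invRep A lam x t₀) ∈ {y | ∃ t : ℝ, y = (NormedSpace.exp (t • B)).mulVec x} := by
  have hexp : exp ((-t₀) • B) = Aᵀ * bdiag (fun i => R2 (-t₀ * lam i)) * A := by
    rw [hB, ← smul_mul_assoc, ← mul_smul_comm,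
      exp_transpose_mul_mul_of_transpose_mul_self_eq_one hA.1, exp_smul_bdiag_smul_Jmat]
  have key : exp ((-t₀) • B) *ᵥ x = Aᵀ *ᵥ invRep A lam x t₀ := by
    rw [hexp, ← mulVec_mulVec, ← mulVec_mulVec, bdiag_mulVec, invRep_eq_cat_R2_mulVec hv ht₀]
  exact ⟨key, -t₀, key.symm⟩
end
end

section
/- Let n = 2M, let A be an invertible real n×n matrix, λ ∈ ℝᴹ with λ₁ ≠ 0, and L = A⁻¹(⊕ᵢ λᵢ K)A. Let x ∈ ℝⁿ with v = Ax satisfying |v_{1,2}| < |v_{1,1}|, and for s ∈ ℝ set x' = exp(sL)x and v' = Ax'. Then v'ᵢ = H(sλᵢ)vᵢ for every i, |v'_{1,2}| < |v'_{1,1}|, sgn(v'_{1,1}) = sgn(v_{1,1}), v'_{1,1}² − v'_{1,2}² = v_{1,1}² − v_{1,2}², artanh(v'_{1,2}/v'_{1,1})/λ₁ = s + artanh(v_{1,2}/v_{1,1})/λ₁, and invRep_h(x') = invRep_h(x). -/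
/-!
Conjugation by `A` turns the flow `exp (s • L)` into the block-diagonal flow
`⊕ᵢ exp (s λᵢ K) = ⊕ᵢ H(s λᵢ)`. In the light-cone coordinates `v₁ ± v₂` of a block, `H(t)` acts
by multiplication with `e^{± t}`. This preserves their product `v₁² - v₂²` and their signs, hence
the condition `|v₂| < |v₁|` and the sign of `v₁`, and it multiplies their ratio by `e^{2t}`, which
shifts `artanh (v₂ / v₁) = log ((v₁ + v₂) / (v₁ - v₂)) / 2` by `t`. So `t₀` shifts by `s`, and in
every other block `H(-t₀ λᵢ)` absorbs the factor `H(s λᵢ)`.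
-/

open Matrix NormedSpace

noncomputable section

/-- `H(t)`: the 2×2 hyperbolic rotation with rows (cosh t, sinh t), (sinh t, cosh t). -/
def Hyp (t : ℝ) : Matrix (Fin 2) (Fin 2) ℝ :=
  !![Real.cosh t, Real.sinh t; Real.sinh t, Real.cosh t]

/-- `G(t)`: the 2×2 shear with rows (1, t), (0, 1). -/
def Gm (t : ℝ) : Matrix (Fin 2) (Fin 2) ℝ := !![1, t; 0, 1]

/-- `K`: rows (0, 1), (1, 0). -/
def Kmat : Matrix (Fin 2) (Fin 2) ℝ := !![0, 1; 1, 0]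

/-- `N`: rows (0, 1), (0, 0). -/
def Nmat : Matrix (Fin 2) (Fin 2) ℝ := !![0, 1; 0, 0]

/-- `e₂ = (0, 1) ∈ ℝ²`. -/
def e2 : Fin 2 → ℝ := ![0, 1]

/-- The inverse hyperbolic tangent. -/
def artanh (x : ℝ) : ℝ := Real.log ((1 + x) / (1 - x)) / 2

/-- `t₀` is valid for `x` (elliptic case): `R(t₀λ₁)e₁ = v₁/‖v₁‖₂` where `v = Ax`. -/
def validE {M : ℕ} [NeZero M] (A : Matrix (Idx M) (Idx M) ℝ) (lam : Fin M → ℝ)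
    (x : Idx M → ℝ) (t₀ : ℝ) : Prop :=
  (R2 (t₀ * lam 0)).mulVec e1 = (norm2 (blk (A.mulVec x) 0))⁻¹ • blk (A.mulVec x) 0

/-- `invRep_e(x; t₀) = ‖v₁‖₂ e₁ ⊕ R(−t₀λ₂)v₂ ⊕ ⋯ ⊕ R(−t₀λ_M)v_M`, where `v = Ax`. -/
def invRepE {M : ℕ} [NeZero M] (A : Matrix (Idx M) (Idx M) ℝ) (lam : Fin M → ℝ)
    (x : Idx M → ℝ) (t₀ : ℝ) : Idx M → ℝ :=
  cat (fun i =>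
    if i = 0 then norm2 (blk (A.mulVec x) 0) • e1
    else (R2 (-(t₀ * lam i))).mulVec (blk (A.mulVec x) i))

/-- The hyperbolic parameter `t₀ = artanh(v_{1,2}/v_{1,1})/λ₁`, where `v = Ax`. -/
def t0H {M : ℕ} [NeZero M] (A : Matrix (Idx M) (Idx M) ℝ) (lam : Fin M → ℝ)
    (x : Idx M → ℝ) : ℝ :=
  artanh (blk (A.mulVec x) 0 1 / blk (A.mulVec x) 0 0) / lam 0

/-- `invRep_h(x) = sgn(v_{1,1})√(v_{1,1}² − v_{1,2}²) e₁ ⊕ H(−t₀λ₂)v₂ ⊕ ⋯`, `v = Ax`. -/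
def invRepH {M : ℕ} [NeZero M] (A : Matrix (Idx M) (Idx M) ℝ) (lam : Fin M → ℝ)
    (x : Idx M → ℝ) : Idx M → ℝ :=
  cat (fun i =>
    if i = 0 then
      (Real.sign (blk (A.mulVec x) 0 0) *
        Real.sqrt (blk (A.mulVec x) 0 0 ^ 2 - blk (A.mulVec x) 0 1 ^ 2)) • e1
    else (Hyp (-(t0H A lam x * lam i))).mulVec (blk (A.mulVec x) i))

/-- The parabolic parameter `t₀ = v_{1,1}/(λ₁ v_{1,2})`, where `v = Ax`. -/
def t0P {M : ℕ} [NeZero M] (A : Matrix (Idx M) (Idx M) ℝ) (lam : Fin M → ℝ)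
    (x : Idx M → ℝ) : ℝ :=
  blk (A.mulVec x) 0 0 / (lam 0 * blk (A.mulVec x) 0 1)

/-- `invRep_p(x) = v_{1,2} e₂ ⊕ G(−t₀λ₂)v₂ ⊕ ⋯ ⊕ G(−t₀λ_M)v_M`, where `v = Ax`. -/
def invRepP {M : ℕ} [NeZero M] (A : Matrix (Idx M) (Idx M) ℝ) (lam : Fin M → ℝ)
    (x : Idx M → ℝ) : Idx M → ℝ :=
  cat (fun i =>
    if i = 0 then blk (A.mulVec x) 0 1 • e2
    else (Gm (-(t0P A lam x * lam i))).mulVec (blk (A.mulVec x) i))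

theorem add_mul_sub_pos_of_abs_lt {a b : ℝ} (h : |b| < |a|) : 0 < (a + b) * (a - b) := by
  nlinarith [sq_lt_sq.mpr h]

theorem mul_add_pos_of_abs_lt {a b : ℝ} (h : |b| < |a|) : 0 < a * (a + b) := by
  nlinarith [abs_mul_abs_self a, abs_mul_abs_self b, neg_abs_le (a * b), abs_mul a b,
    abs_nonneg b]

theorem sign_eq_sign_of_mul_pos {a b : ℝ} (h : 0 < a * b) : Real.sign a = Real.sign b := by
  rcases mul_pos_iff.mp h with ⟨ha, hb⟩ | ⟨ha, hb⟩
  · rw [Real.sign_of_pos ha, Real.sign_of_pos hb]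
  · rw [Real.sign_of_neg ha, Real.sign_of_neg hb]

theorem artanh_div {a b : ℝ} (ha : a ≠ 0) :
    artanh (b / a) = Real.log ((a + b) / (a - b)) / 2 := by
  rw [artanh, one_add_div ha, one_sub_div ha, div_div_div_cancel_right₀ ha]

section HyperbolicRotation

variable (t : ℝ) {v : Fin 2 → ℝ}

theorem hyp_mul (a b : ℝ) : Hyp a * Hyp b = Hyp (a + b) := by
  ext i j
  fin_cases i <;> fin_cases j <;>
    simp [Hyp, Matrix.mul_apply, Fin.sum_univ_two, Real.cosh_add, Real.sinh_add] <;> ring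

theorem hyp_mulVec_zero : (Hyp t *ᵥ v) 0 = Real.cosh t * v 0 + Real.sinh t * v 1 := by
  simp [Hyp, mulVec, dotProduct, Fin.sum_univ_two]

theorem hyp_mulVec_one : (Hyp t *ᵥ v) 1 = Real.sinh t * v 0 + Real.cosh t * v 1 := by
  simp [Hyp, mulVec, dotProduct, Fin.sum_univ_two]

theorem hyp_mulVec_add : (Hyp t *ᵥ v) 0 + (Hyp t *ᵥ v) 1 = Real.exp t * (v 0 + v 1) := by
  rw [hyp_mulVec_zero, hyp_mulVec_one, ← Real.cosh_add_sinh]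
  ring

theorem hyp_mulVec_sub : (Hyp t *ᵥ v) 0 - (Hyp t *ᵥ v) 1 = Real.exp (-t) * (v 0 - v 1) := by
  rw [hyp_mulVec_zero, hyp_mulVec_one, ← Real.cosh_sub_sinh]
  ring

theorem hyp_mulVec_sq_sub_sq :
    (Hyp t *ᵥ v) 0 ^ 2 - (Hyp t *ᵥ v) 1 ^ 2 = v 0 ^ 2 - v 1 ^ 2 := by
  have hexp : Real.exp t * Real.exp (-t) = 1 := by
    rw [← Real.exp_add, add_neg_cancel, Real.exp_zero]
  linear_combination (v 0 + v 1) * (v 0 - v 1) * hexp +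
    ((Hyp t *ᵥ v) 0 - (Hyp t *ᵥ v) 1) * hyp_mulVec_add t (v := v) +
    Real.exp t * (v 0 + v 1) * hyp_mulVec_sub t (v := v)

theorem abs_lt_abs_hyp_mulVec (hv : |v 1| < |v 0|) : |(Hyp t *ᵥ v) 1| < |(Hyp t *ᵥ v) 0| := by
  rw [← sq_lt_sq, ← sub_pos, hyp_mulVec_sq_sub_sq, sub_pos, sq_lt_sq]
  exact hv

theorem sign_hyp_mulVec (hv : |v 1| < |v 0|) : Real.sign ((Hyp t *ᵥ v) 0) = Real.sign (v 0) := by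
  calc Real.sign ((Hyp t *ᵥ v) 0)
      = Real.sign ((Hyp t *ᵥ v) 0 + (Hyp t *ᵥ v) 1) :=
        sign_eq_sign_of_mul_pos (mul_add_pos_of_abs_lt (abs_lt_abs_hyp_mulVec t hv))
    _ = Real.sign (v 0 + v 1) := by
        have hs : v 0 + v 1 ≠ 0 := left_ne_zero_of_mul (add_mul_sub_pos_of_abs_lt hv).ne'
        rw [hyp_mulVec_add]
        exact sign_eq_sign_of_mul_pos
          (by rw [mul_assoc]; exact mul_pos (Real.exp_pos t) (mul_self_pos.mpr hs))
    _ = Real.sign (v 0) := (sign_eq_sign_of_mul_pos (mul_add_pos_of_abs_lt hv)).symm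

theorem artanh_hyp_mulVec (hv : |v 1| < |v 0|) :
    artanh ((Hyp t *ᵥ v) 1 / (Hyp t *ᵥ v) 0) = t + artanh (v 1 / v 0) := by
  have hv0 : v 0 ≠ 0 := abs_pos.mp ((abs_nonneg _).trans_lt hv)
  have hw0 : (Hyp t *ᵥ v) 0 ≠ 0 :=
    abs_pos.mp ((abs_nonneg _).trans_lt (abs_lt_abs_hyp_mulVec t hv))
  have hq : 0 < (v 0 + v 1) * (v 0 - v 1) := add_mul_sub_pos_of_abs_lt hv
  rw [artanh_div hw0, artanh_div hv0, hyp_mulVec_add, hyp_mulVec_sub, mul_div_mul_comm,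
    ← Real.exp_sub, Real.log_mul (Real.exp_ne_zero _) (div_ne_zero (left_ne_zero_of_mul hq.ne')
      (right_ne_zero_of_mul hq.ne')), Real.log_exp]
  ring

end HyperbolicRotation

-- The columns are the eigenvectors `(1, 1)` and `(1, -1)` of `K`.
def lightCone : (Matrix (Fin 2) (Fin 2) ℝ)ˣ where
  val := !![1, 1; 1, -1]
  inv := (2⁻¹ : ℝ) • !![1, 1; 1, -1]
  val_inv := by ext i j; fin_cases i <;> fin_cases j <;> norm_num [Matrix.mul_apply]
  inv_val := by ext i j; fin_cases i <;> fin_cases j <;> norm_num [Matrix.mul_apply]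

theorem exp_smul_kmat (t : ℝ) : exp (t • Kmat) = Hyp t := by
  have hK : t • Kmat = (lightCone : Matrix (Fin 2) (Fin 2) ℝ) * diagonal ![t, -t] *
      (↑lightCone⁻¹ : Matrix (Fin 2) (Fin 2) ℝ) := by
    ext i j
    fin_cases i <;> fin_cases j <;>
      norm_num [lightCone, Kmat, Matrix.mul_apply, vecMul_diagonal] <;> ring
  have hexp : exp (![t, -t] : Fin 2 → ℝ) = ![Real.exp t, Real.exp (-t)] := by
    ext p; fin_cases p <;> simp [Pi.coe_exp, Real.exp_eq_exp_ℝ]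
  rw [hK, Matrix.exp_units_conj, Matrix.exp_diagonal, hexp]
  ext i j
  fin_cases i <;> fin_cases j <;>
    norm_num [lightCone, Hyp, Matrix.mul_apply, vecMul_diagonal, Real.cosh_eq, Real.sinh_eq] <;>
    ring

-- `Pi.coe_exp` needs a normed algebra structure on the blocks; the operator norm provides one.
open scoped Norms.Operator in
theorem exp_smul_bdiag_smul_kmat {M : ℕ} (lam : Fin M → ℝ) (s : ℝ) :
    exp (s • bdiag (fun i => lam i • Kmat)) = bdiag (fun i => Hyp (s * lam i)) := by
  rw [bdiag, ← blockDiagonal_smul, Matrix.exp_blockDiagonal, bdiag]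
  congr 1
  ext1 i
  refine (Pi.coe_exp (s • fun i => lam i • Kmat) i).trans ?_
  rw [Pi.smul_apply, smul_smul]
  exact exp_smul_kmat _

theorem blk_bdiag_mulVec {M : ℕ} (C : Fin M → Matrix (Fin 2) (Fin 2) ℝ) (v : Idx M → ℝ)
    (i : Fin M) : blk (bdiag C *ᵥ v) i = C i *ᵥ blk v i := by
  ext p
  simp [blk, bdiag, mulVec, dotProduct, Fintype.sum_prod_type, blockDiagonal_apply]

theorem mulVec_exp_smul_conj {𝕂 n : Type*} [RCLike 𝕂] [Fintype n] [DecidableEq n]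
    {A : Matrix n n 𝕂} (hA : IsUnit A) (D : Matrix n n 𝕂) (s : 𝕂) (x : n → 𝕂) :
    A *ᵥ (exp (s • (A⁻¹ * D * A)) *ᵥ x) = exp (s • D) *ᵥ (A *ᵥ x) := by
  rw [← Matrix.smul_mul, ← Matrix.mul_smul, Matrix.exp_conj' A _ hA, mulVec_mulVec,
    ← Matrix.mul_assoc, ← Matrix.mul_assoc, mul_nonsing_inv _ ((isUnit_iff_isUnit_det A).mp hA),
    Matrix.one_mul, mulVec_mulVec]

section InvRepH

variable {M : ℕ} [NeZero M] {A : Matrix (Idx M) (Idx M) ℝ} {lam : Fin M → ℝ} {x x' : Idx M → ℝ}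
  {s : ℝ}

theorem t0H_eq_add (hlam : lam 0 ≠ 0) (hv : |blk (A *ᵥ x) 0 1| < |blk (A *ᵥ x) 0 0|)
    (hx' : blk (A *ᵥ x') 0 = Hyp (s * lam 0) *ᵥ blk (A *ᵥ x) 0) :
    t0H A lam x' = s + t0H A lam x := by
  rw [t0H, t0H, hx', artanh_hyp_mulVec _ hv, add_div, mul_div_cancel_right₀ s hlam]

theorem invRepH_eq_of_blk_eq_hyp_mulVec (hlam : lam 0 ≠ 0)
    (hv : |blk (A *ᵥ x) 0 1| < |blk (A *ᵥ x) 0 0|)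
    (hx' : ∀ i, blk (A *ᵥ x') i = Hyp (s * lam i) *ᵥ blk (A *ᵥ x) i) :
    invRepH A lam x' = invRepH A lam x := by
  have ht0 := t0H_eq_add hlam hv (hx' 0)
  ext ⟨p, i⟩
  simp only [invRepH, cat]
  by_cases hi : i = 0
  · rw [if_pos hi, if_pos hi, hx' 0, sign_hyp_mulVec _ hv, hyp_mulVec_sq_sub_sq]
  · rw [if_neg hi, if_neg hi, ht0, hx' i, mulVec_mulVec, hyp_mul]
    congr 3
    ring

end InvRepH

/-- **Hyperbolic invariance of `invRep_h`.** With `x' = exp(sL)x`, `v' = Ax'`: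
`v'ᵢ = H(sλᵢ)vᵢ` for all `i`, `|v'_{1,2}| < |v'_{1,1}|`, `sgn(v'_{1,1}) = sgn(v_{1,1})`,
`v'_{1,1}² − v'_{1,2}² = v_{1,1}² − v_{1,2}²`,
`artanh(v'_{1,2}/v'_{1,1})/λ₁ = s + artanh(v_{1,2}/v_{1,1})/λ₁`, and
`invRep_h(x') = invRep_h(x)`. -/
theorem stmt14 (M : ℕ) [NeZero M] (A : Matrix (Idx M) (Idx M) ℝ) (hA : IsUnit A)
    (lam : Fin M → ℝ) (hlam : lam 0 ≠ 0)
    (L : Matrix (Idx M) (Idx M) ℝ)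
    (hL : L = A⁻¹ * bdiag (fun i => lam i • Kmat) * A)
    (x : Idx M → ℝ) (hv : |blk (A.mulVec x) 0 1| < |blk (A.mulVec x) 0 0|)
    (s : ℝ) (x' : Idx M → ℝ) (hx' : x' = (exp (s • L)).mulVec x) :
    (∀ i : Fin M, blk (A.mulVec x') i = (Hyp (s * lam i)).mulVec (blk (A.mulVec x) i)) ∧
      |blk (A.mulVec x') 0 1| < |blk (A.mulVec x') 0 0| ∧
      Real.sign (blk (A.mulVec x') 0 0) = Real.sign (blk (A.mulVec x) 0 0) ∧
      blk (A.mulVec x') 0 0 ^ 2 - blk (A.mulVec x') 0 1 ^ 2 =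
        blk (A.mulVec x) 0 0 ^ 2 - blk (A.mulVec x) 0 1 ^ 2 ∧
      artanh (blk (A.mulVec x') 0 1 / blk (A.mulVec x') 0 0) / lam 0 =
        s + artanh (blk (A.mulVec x) 0 1 / blk (A.mulVec x) 0 0) / lam 0 ∧
      invRepH A lam x' = invRepH A lam x := by
  have hblk : ∀ i, blk (A *ᵥ x') i = Hyp (s * lam i) *ᵥ blk (A *ᵥ x) i := by
    intro i
    rw [hx', hL, mulVec_exp_smul_conj hA, exp_smul_bdiag_smul_kmat, blk_bdiag_mulVec]
  refine ⟨hblk, ?_, ?_, ?_, t0H_eq_add hlam hv (hblk 0),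
    invRepH_eq_of_blk_eq_hyp_mulVec hlam hv hblk⟩
  · rw [hblk 0]; exact abs_lt_abs_hyp_mulVec _ hv
  · rw [hblk 0]; exact sign_hyp_mulVec _ hv
  · rw [hblk 0]; exact hyp_mulVec_sq_sub_sq _
end
end

section
/- Let n = 2M, let A be an invertible real n×n matrix, λ ∈ ℝᴹ with λ₁ ≠ 0, and L = A⁻¹(⊕ᵢ λᵢ N)A. Let x ∈ ℝⁿ, v = Ax with blocks v₁, …, v_M, assume v_{1,2} ≠ 0, and set t₀ = v_{1,1}/(λ₁·v_{1,2}). Then exp(−t₀L)·x = A⁻¹(v_{1,2}·e₂ ⊕ G(−t₀λ₂)v₂ ⊕ ⋯ ⊕ G(−t₀λ_M)v_M); in particular A⁻¹·invRep_p(x) lies on the orbit {exp(tL)x : t ∈ ℝ} of x. -/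
open Matrix NormedSpace

noncomputable section

/-! `L` is conjugate by `A` to `⊕ᵢ λᵢN`, and `N² = 0`, so `exp(tL) = A⁻¹(⊕ᵢ G(tλᵢ))A`.
At `t = −t₀` the first shear `G(−v_{1,1}/v_{1,2})` kills the first coordinate of `v₁`,
leaving `v_{1,2}e₂`; the other blocks are exactly those of `invRep_p(x)`. -/

theorem exp_eq_one_add_of_sq_eq_zero {𝔸 : Type*} [Ring 𝔸] [Algebra ℚ 𝔸] [TopologicalSpace 𝔸]
    [IsTopologicalRing 𝔸] [T2Space 𝔸] {a : 𝔸} (ha : a ^ 2 = 0) : exp a = 1 + a := by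
  rw [exp_eq_tsum_rat]
  dsimp only
  rw [tsum_eq_sum (s := Finset.range 2)]
  · simp [Finset.sum_range_succ]
  · intro n hn
    rw [pow_eq_zero_of_le (by simp at hn; omega) ha, smul_zero]

theorem Nmat_sq : Nmat ^ 2 = 0 := by
  ext p q
  fin_cases p <;> fin_cases q <;> simp [Nmat, sq]

theorem one_add_smul_Nmat (s : ℝ) : 1 + s • Nmat = Gm s := by
  ext p q
  fin_cases p <;> fin_cases q <;> simp [Nmat, Gm]

theorem Matrix.exp_smul_conj' {m : Type*} [Fintype m] [DecidableEq m] (U D : Matrix m m ℝ)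
    (hU : IsUnit U) (t : ℝ) : exp (t • (U⁻¹ * D * U)) = U⁻¹ * exp (t • D) * U := by
  rw [← Matrix.exp_conj' U _ hU, Matrix.mul_smul, Matrix.smul_mul]

theorem exp_smul_bdiag_smul_Nmat {M : ℕ} (lam : Fin M → ℝ) (t : ℝ) :
    exp (t • bdiag (fun i => lam i • Nmat)) = blockDiagonal (fun i => Gm (t * lam i)) := by
  have hsq : (fun i => (t * lam i) • Nmat) ^ 2 = 0 := by
    funext i
    simp [smul_pow, Nmat_sq]
  rw [bdiag, ← blockDiagonal_smul, Matrix.exp_blockDiagonal]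
  simp only [Pi.smul_def, smul_smul, exp_eq_one_add_of_sq_eq_zero hsq]
  congr 1
  funext i
  exact one_add_smul_Nmat _

theorem blockDiagonal_mulVec_eq_cat {M : ℕ} (C : Fin M → Matrix (Fin 2) (Fin 2) ℝ)
    (v : Idx M → ℝ) : blockDiagonal C *ᵥ v = cat (fun i => C i *ᵥ blk v i) := by
  funext ⟨p, i⟩
  simp [cat, blk, mulVec, dotProduct, Fintype.sum_prod_type_right, blockDiagonal_apply,
    ite_mul]

theorem Gm_neg_div_mulVec (u : Fin 2 → ℝ) (hu : u 1 ≠ 0) :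
    Gm (-(u 0 / u 1)) *ᵥ u = u 1 • e2 := by
  ext p
  fin_cases p <;> simp [Gm, e2, mulVec, dotProduct, Fin.sum_univ_two]
  field_simp
  ring

theorem t0P_mul_lam_zero {M : ℕ} [NeZero M] (A : Matrix (Idx M) (Idx M) ℝ) (lam : Fin M → ℝ)
    (hlam : lam 0 ≠ 0) (x : Idx M → ℝ) :
    t0P A lam x * lam 0 = blk (A *ᵥ x) 0 0 / blk (A *ᵥ x) 0 1 := by
  rw [t0P, div_mul_eq_mul_div, mul_comm (lam 0), mul_div_mul_right _ _ hlam]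

/-- **Parabolic orbit representation.** -/
theorem stmt15 (M : ℕ) [NeZero M] (A : Matrix (Idx M) (Idx M) ℝ) (hA : IsUnit A)
    (lam : Fin M → ℝ) (hlam : lam 0 ≠ 0)
    (L : Matrix (Idx M) (Idx M) ℝ)
    (hL : L = A⁻¹ * bdiag (fun i => lam i • Nmat) * A)
    (x : Idx M → ℝ) (hv : blk (A.mulVec x) 0 1 ≠ 0) :
    (exp ((-(t0P A lam x)) • L)).mulVec x = A⁻¹.mulVec (invRepP A lam x) ∧
      A⁻¹.mulVec (invRepP A lam x) ∈
        {y | ∃ t : ℝ, y = (exp (t • L)).mulVec x} := by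
  have hflow : exp ((-(t0P A lam x)) • L) *ᵥ x = A⁻¹ *ᵥ invRepP A lam x := by
    rw [hL, Matrix.exp_smul_conj' A _ hA, exp_smul_bdiag_smul_Nmat, ← mulVec_mulVec,
      ← mulVec_mulVec, blockDiagonal_mulVec_eq_cat, invRepP]
    congr 2
    funext i
    split_ifs with hi
    · subst hi
      rw [neg_mul, t0P_mul_lam_zero A lam hlam, Gm_neg_div_mulVec _ hv]
    · rw [neg_mul]
  exact ⟨hflow, -(t0P A lam x), hflow.symm⟩
end
end

section
/- Let n = 2M, A₀ ∈ SO(n), let p₁, …, p_M be real polynomials evaluated on 2×2 real matrices, and let α, β ∈ ℝ. Define ρ : ℝⁿ → ℝ by ρ(x) = α·trace(W(x)) + β·(W(x)_{12} − W(x)_{21}), where W(x) = Σ_{i=1}^{M} pᵢ(vᵢvᵢᵀ) and v = A₀x has blocks v₁, …, v_M ∈ ℝ². Then ρ is invariant under the one-parameter subgroup {A₀ᵀ(⊕ᵢ R(t))A₀ : t ∈ ℝ}: for all t ∈ ℝ and all x ∈ ℝⁿ, ρ(A₀ᵀ(⊕ᵢ R(t))A₀ · x) = ρ(x). -/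
/-! The map `A₀ᵀ(⊕ᵢ R(t))A₀` rotates every block `vᵢ` of `v = A₀x` by `R(t)`, so each
`vᵢvᵢᵀ`, hence each `pᵢ(vᵢvᵢᵀ)` and `W(x)`, is conjugated by the orthogonal matrix `R(t)`.
The trace is invariant under any such conjugation, and `W₁₂ − W₂₁` under conjugation by a
rotation. -/

open Matrix

noncomputable section

/-- `W(x) = Σᵢ pᵢ(vᵢvᵢᵀ)` where `v = A₀x`, `vᵢvᵢᵀ` the 2×2 outer product, and each
polynomial `pᵢ` is evaluated on 2×2 matrices via the polynomial functional calculus. -/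
def Wmat {M : ℕ} (A₀ : Matrix (Idx M) (Idx M) ℝ) (p : Fin M → Polynomial ℝ)
    (x : Idx M → ℝ) : Matrix (Fin 2) (Fin 2) ℝ :=
  ∑ i : Fin M,
    Polynomial.aeval
      (Matrix.vecMulVec (blk (A₀.mulVec x) i) (blk (A₀.mulVec x) i)) (p i)

theorem Polynomial.aeval_units_conj {R A : Type*} [CommSemiring R] [Ring A] [Algebra R A]
    (u : Aˣ) (x : A) (q : Polynomial R) :
    Polynomial.aeval (↑u * x * ↑u⁻¹) q = ↑u * Polynomial.aeval x q * ↑u⁻¹ := by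
  simpa [ConjAct.units_smul_def] using
    Polynomial.aeval_algHom_apply (MulSemiringAction.toAlgHom R A (ConjAct.toConjAct u)) x q

theorem Matrix.vecMulVec_mulVec_mulVec {m n k α : Type*} [Fintype n] [CommSemiring α]
    (U : Matrix m n α) (V : Matrix k n α) (u w : n → α) :
    vecMulVec (U *ᵥ u) (V *ᵥ w) = U * vecMulVec u w * Vᵀ := by
  rw [mul_vecMulVec, vecMulVec_mul, vecMul_transpose]

theorem blk_blockDiagonal_mulVec {M : ℕ} (C : Fin M → Matrix (Fin 2) (Fin 2) ℝ)
    (v : Idx M → ℝ) (i : Fin M) :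
    blk (blockDiagonal C *ᵥ v) i = C i *ᵥ blk v i := by
  ext q
  simp [blk, mulVec, dotProduct, blockDiagonal_apply, Fintype.sum_prod_type]

theorem R2_transpose_mul_self (t : ℝ) : (R2 t)ᵀ * R2 t = 1 := by
  ext i j
  fin_cases i <;> fin_cases j <;>
    simp [R2, mul_apply, Fin.sum_univ_two, one_apply] <;> nlinarith [Real.sin_sq_add_cos_sq t]

theorem R2_conj_apply_sub (t : ℝ) (W : Matrix (Fin 2) (Fin 2) ℝ) :
    (R2 t * W * (R2 t)ᵀ) 0 1 - (R2 t * W * (R2 t)ᵀ) 1 0 = W 0 1 - W 1 0 := by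
  simp only [R2, cons_mul, Nat.succ_eq_add_one, Nat.reduceAdd, empty_mul, Equiv.symm_apply_apply,
    Fin.isValue, mul_apply, of_apply, cons_val', vecMul, dotProduct, Fin.sum_univ_two, cons_val_zero,
    cons_val_one, cons_val_fin_one, neg_mul, transpose_apply, mul_neg]
  linear_combination (W 0 1 - W 1 0) * Real.sin_sq_add_cos_sq t

theorem Wmat_mulVec_conj {M : ℕ} {A₀ : Matrix (Idx M) (Idx M) ℝ} (hA₀ : A₀ * A₀ᵀ = 1)
    {U : Matrix (Fin 2) (Fin 2) ℝ} (hU : Uᵀ * U = 1) (p : Fin M → Polynomial ℝ) (x : Idx M → ℝ) :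
    Wmat A₀ p ((A₀ᵀ * bdiag (fun _ => U) * A₀) *ᵥ x) = U * Wmat A₀ p x * Uᵀ := by
  have hv : A₀ *ᵥ ((A₀ᵀ * bdiag (fun _ => U) * A₀) *ᵥ x) = bdiag (fun _ => U) *ᵥ (A₀ *ᵥ x) := by
    rw [mulVec_mulVec, mulVec_mulVec, ← Matrix.mul_assoc, ← Matrix.mul_assoc, hA₀, Matrix.one_mul]
  let u : (Matrix (Fin 2) (Fin 2) ℝ)ˣ := ⟨U, Uᵀ, mul_eq_one_comm.mp hU, hU⟩
  rw [Wmat, Wmat, hv, Finset.mul_sum, Finset.sum_mul]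
  refine Finset.sum_congr rfl fun i _ => ?_
  rw [bdiag, blk_blockDiagonal_mulVec, vecMulVec_mulVec_mulVec]
  exact Polynomial.aeval_units_conj u _ (p i)

/-- **Invariance of `ρ`.** With `W(x) = Σᵢ pᵢ(vᵢvᵢᵀ)`, `v = A₀x`, and
`ρ(x) = α·trace W(x) + β·(W(x)₁₂ − W(x)₂₁)`, the function `ρ` is invariant under the
one-parameter subgroup `{A₀ᵀ(⊕ᵢ R(t))A₀ : t ∈ ℝ}`. -/
theorem stmt19 (M : ℕ) (A₀ : Matrix (Idx M) (Idx M) ℝ) (hA₀ : A₀ ∈ SOb M)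
    (p : Fin M → Polynomial ℝ) (α β : ℝ)
    (ρ : (Idx M → ℝ) → ℝ)
    (hρ : ∀ x : Idx M → ℝ,
      ρ x = α * (Wmat A₀ p x).trace + β * (Wmat A₀ p x 0 1 - Wmat A₀ p x 1 0)) :
    ∀ (t : ℝ) (x : Idx M → ℝ),
      ρ ((A₀ᵀ * bdiag (fun _ => R2 t) * A₀).mulVec x) = ρ x := by
  intro t x
  have hR := R2_transpose_mul_self t
  rw [hρ, hρ, Wmat_mulVec_conj (mul_eq_one_comm.mp hA₀.1) hR, trace_mul_cycle, hR, Matrix.one_mul,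
    R2_conj_apply_sub]
end
end
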